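/- arXiv:2209.07882 — 4 statements merged into one kernel-verified Lean document; each statement's English description precedes it below -/
import Mathlib

section
/- Let a > 0 and b > 0, and let ω > 0 satisfy the transcendental equation 1/b = ω·tan(ω·a). Then for every x ∈ [−a, a], ∫_{−a}^{a} e^{−|x−y|/b} · cos(ω·y) dy = (2b/(1 + b²ω²)) · cos(ω·x); that is, cos(ω·x) is an eigenfunction of the exponential covariance kernel on [−a, a] with eigenvalue 2b/(1 + b²ω²). -/
/-!
Split the integral at `y = x`, where the kernel factors as `e^{-x/b} e^{y/b}` on the left and
`e^{x/b} e^{-y/b}` on the right, and integrate `e^{cy} cos(ωy)` in closed form. The two boundary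
terms at `y = x` add up to `2b/(1 + b²ω²) · cos(ωx)`, and the transcendental equation, in the form
`b⁻¹ cos(ωa) = ω sin(ωa)`, is exactly what makes the boundary terms at `y = ±a` vanish.
-/

open Real intervalIntegral

noncomputable def expCosPrimitive (c w t : ℝ) : ℝ :=
  exp (c * t) * (c * cos (w * t) + w * sin (w * t)) / (c ^ 2 + w ^ 2)

lemma hasDerivAt_expCosPrimitive {c w : ℝ} (hD : c ^ 2 + w ^ 2 ≠ 0) (t : ℝ) :
    HasDerivAt (expCosPrimitive c w) (exp (c * t) * cos (w * t)) t := by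
  have hc : HasDerivAt (fun s : ℝ => c * s) c t := by simpa using (hasDerivAt_id t).const_mul c
  have hw : HasDerivAt (fun s : ℝ => w * s) w t := by simpa using (hasDerivAt_id t).const_mul w
  have h := (((hasDerivAt_exp _).comp t hc).mul ((((hasDerivAt_cos _).comp t hw).const_mul c).add
    (((hasDerivAt_sin _).comp t hw).const_mul w))).div_const (c ^ 2 + w ^ 2)
  refine h.congr_deriv ?_
  simp only [Function.comp_apply, Pi.add_apply]
  field_simp
  ring

lemma integral_exp_mul_mul_cos {c w : ℝ} (hD : c ^ 2 + w ^ 2 ≠ 0) (l r : ℝ) :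
    ∫ y in l..r, exp (c * y) * cos (w * y) = expCosPrimitive c w r - expCosPrimitive c w l :=
  integral_eq_sub_of_hasDerivAt (fun t _ => hasDerivAt_expCosPrimitive hD t)
    (Continuous.intervalIntegrable (by fun_prop) l r)

lemma expCosPrimitive_neg (c w t : ℝ) : expCosPrimitive (-c) w t = -expCosPrimitive c w (-t) := by
  simp only [expCosPrimitive, mul_neg, neg_mul, cos_neg, sin_neg, neg_sq]
  ring

lemma expCosPrimitive_neg_eq_zero {c w a : ℝ} (h : c * cos (w * a) = w * sin (w * a)) :
    expCosPrimitive c w (-a) = 0 := by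
  simp only [expCosPrimitive, mul_neg, cos_neg, sin_neg, h]
  ring

lemma exp_mul_expCosPrimitive_add (c w x : ℝ) :
    exp (-(c * x)) * expCosPrimitive c w x + exp (c * x) * expCosPrimitive c w (-x)
      = 2 * c / (c ^ 2 + w ^ 2) * cos (w * x) := by
  have hexp : exp (-(c * x)) * exp (c * x) = 1 := by rw [← exp_add, neg_add_cancel, exp_zero]
  simp only [expCosPrimitive, mul_neg, cos_neg, sin_neg]
  linear_combination 2 * c * cos (w * x) / (c ^ 2 + w ^ 2) * hexp

lemma integral_exp_neg_abs_sub_div_mul (b : ℝ) {f : ℝ → ℝ} {l r x : ℝ}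
    (hf : IntervalIntegrable f MeasureTheory.volume l r) (hlx : l ≤ x) (hxr : x ≤ r) :
    ∫ y in l..r, exp (-|x - y| / b) * f y
      = exp (-(b⁻¹ * x)) * (∫ y in l..x, exp (b⁻¹ * y) * f y)
        + exp (b⁻¹ * x) * ∫ y in x..r, exp (-b⁻¹ * y) * f y := by
  have hint : ∀ {u v}, Set.uIcc u v ⊆ Set.uIcc l r →
      IntervalIntegrable (fun y => exp (-|x - y| / b) * f y) MeasureTheory.volume u v :=
    fun hsub => (hf.mono_set hsub).continuousOn_mul (by fun_prop)
  rw [← integral_add_adjacent_intervals (b := x)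
      (hint (Set.uIcc_subset_uIcc_left (Set.mem_uIcc_of_le hlx hxr)))
      (hint (Set.uIcc_subset_uIcc_right (Set.mem_uIcc_of_le hlx hxr))),
    ← integral_const_mul, ← integral_const_mul]
  congr 1 <;> refine integral_congr fun y hy => ?_
  · rw [Set.uIcc_of_le hlx] at hy
    rw [abs_of_nonneg (sub_nonneg.2 hy.2), ← mul_assoc, ← exp_add]
    ring_nf
  · rw [Set.uIcc_of_le hxr] at hy
    rw [abs_of_nonpos (sub_nonpos.2 hy.1), ← mul_assoc, ← exp_add]
    ring_nf

lemma inv_mul_cos_eq_mul_sin {a b ω : ℝ} (hb : b ≠ 0) (h : 1 / b = ω * tan (ω * a)) :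
    b⁻¹ * cos (ω * a) = ω * sin (ω * a) := by
  have hcos : cos (ω * a) ≠ 0 := fun hcos => by
    simp [tan_eq_sin_div_cos, hcos, hb] at h
  rw [tan_eq_sin_div_cos] at h
  field_simp at h ⊢
  linarith

theorem exp_kernel_cos_eigenfunction_general
    (a b ω : ℝ) (hb : 0 < b)
    (htrans : 1 / b = ω * Real.tan (ω * a)) :
    ∀ x ∈ Set.Icc (-a) a,
      ∫ y in (-a)..a, Real.exp (-|x - y| / b) * Real.cos (ω * y)
        = (2 * b / (1 + b ^ 2 * ω ^ 2)) * Real.cos (ω * x) := by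
  rintro x ⟨hax, hxa⟩
  have hD : b⁻¹ ^ 2 + ω ^ 2 ≠ 0 := by positivity
  have hD' : (-b⁻¹) ^ 2 + ω ^ 2 ≠ 0 := by rwa [neg_sq]
  have hboundary : expCosPrimitive b⁻¹ ω (-a) = 0 :=
    expCosPrimitive_neg_eq_zero (inv_mul_cos_eq_mul_sin hb.ne' htrans)
  have heigenvalue : 2 * b⁻¹ / (b⁻¹ ^ 2 + ω ^ 2) = 2 * b / (1 + b ^ 2 * ω ^ 2) := by
    field_simp
  rw [integral_exp_neg_abs_sub_div_mul b (Continuous.intervalIntegrable (by fun_prop) _ _) hax hxa, integral_exp_mul_mul_cos hD, integral_exp_mul_mul_cos hD', expCosPrimitive_neg,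
    expCosPrimitive_neg, hboundary, ← heigenvalue, ← exp_mul_expCosPrimitive_add]
  ring

/-- Eigenfunction property of the exponential covariance kernel: if `ω > 0` solves the
transcendental equation `1/b = ω·tan(ω·a)`, then `cos(ω·x)` is an eigenfunction with
eigenvalue `2b/(1 + b²ω²)`. -/
theorem exp_kernel_cos_eigenfunction
    (a b ω : ℝ) (ha : 0 < a) (hb : 0 < b) (hω : 0 < ω)
    (htrans : 1 / b = ω * Real.tan (ω * a)) :
    ∀ x ∈ Set.Icc (-a) a,
      ∫ y in (-a)..a, Real.exp (-|x - y| / b) * Real.cos (ω * y)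
        = (2 * b / (1 + b ^ 2 * ω ^ 2)) * Real.cos (ω * x) :=
  exp_kernel_cos_eigenfunction_general a b ω hb htrans
end

section
/- Let a > 0 and b > 0, and let ω > 0 satisfy the transcendental equation ω + (1/b)·tan(ω·a) = 0. Then for every x ∈ [−a, a], ∫_{−a}^{a} e^{−|x−y|/b} · sin(ω·y) dy = (2b/(1 + b²ω²)) · sin(ω·x); that is, sin(ω·x) is an eigenfunction of the exponential covariance kernel on [−a, a] with eigenvalue 2b/(1 + b²ω²). -/
open Real intervalIntegral

/-!
Splitting the integral at `y = x` turns the kernel into `exp (∓ c (x - y))` with `c = 1 / b`,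
and `exp (c y) sin (ω y)` has an elementary primitive. The terms at `y = x` combine to
`2c / (c² + ω²) · sin (ω x)`, while those at `y = ± a` are multiples of
`c sin (ω a) + ω cos (ω a)`, which the transcendental equation makes vanish.
-/

noncomputable def expSinPrimitive (c ω y : ℝ) : ℝ :=
  exp (c * y) * (c * sin (ω * y) - ω * cos (ω * y)) / (c ^ 2 + ω ^ 2)

theorem hasDerivAt_expSinPrimitive {c ω : ℝ} (h : c ^ 2 + ω ^ 2 ≠ 0) (y : ℝ) :
    HasDerivAt (expSinPrimitive c ω) (exp (c * y) * sin (ω * y)) y := by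
  have he := ((hasDerivAt_id' y).const_mul c).exp
  have hs := ((hasDerivAt_id' y).const_mul ω).sin
  have hc := ((hasDerivAt_id' y).const_mul ω).cos
  have hnum := he.mul ((hs.const_mul c).sub (hc.const_mul ω))
  refine (hnum.div_const (c ^ 2 + ω ^ 2)).congr_deriv ?_
  simp only [Pi.sub_apply]
  field_simp
  ring

theorem integral_exp_mul_mul_sin {c ω : ℝ} (h : c ^ 2 + ω ^ 2 ≠ 0) (u v : ℝ) :
    ∫ y in u..v, exp (c * y) * sin (ω * y) =
      expSinPrimitive c ω v - expSinPrimitive c ω u :=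
  integral_eq_sub_of_hasDerivAt (fun y _ => hasDerivAt_expSinPrimitive h y)
    ((by fun_prop : Continuous fun y => exp (c * y) * sin (ω * y)).intervalIntegrable u v)

theorem integral_exp_neg_mul_abs_sub_mul {f : ℝ → ℝ} (hf : Continuous f) (c : ℝ) {u v x : ℝ}
    (hx : x ∈ Set.Icc u v) :
    ∫ y in u..v, exp (-c * |x - y|) * f y =
      exp (-c * x) * (∫ y in u..x, exp (c * y) * f y) +
        exp (c * x) * ∫ y in x..v, exp (-c * y) * f y := by
  have hcont : Continuous fun y => exp (-c * |x - y|) * f y := by fun_prop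
  rw [← integral_add_adjacent_intervals (hcont.intervalIntegrable u x)
    (hcont.intervalIntegrable x v), ← integral_const_mul, ← integral_const_mul]
  congr 1
  · refine integral_congr fun y hy => ?_
    rw [Set.uIcc_of_le hx.1] at hy
    rw [abs_of_nonneg (sub_nonneg.2 hy.2), ← mul_assoc, ← exp_add]
    ring_nf
  · refine integral_congr fun y hy => ?_
    rw [Set.uIcc_of_le hx.2] at hy
    rw [abs_sub_comm, abs_of_nonneg (sub_nonneg.2 hy.1), ← mul_assoc, ← exp_add]
    ring_nf

theorem mul_sin_add_mul_cos_eq_zero_of_add_mul_tan_eq_zero {a c ω : ℝ}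
    (h : ω + c * tan (ω * a) = 0) : c * sin (ω * a) + ω * cos (ω * a) = 0 := by
  rw [tan_eq_sin_div_cos] at h
  by_cases hcos : cos (ω * a) = 0
  · -- Lean's `tan` is `0` where `cos` vanishes, so `h` forces `ω = 0`.
    rw [hcos, div_zero, mul_zero, add_zero] at h
    simp [h]
  · field_simp at h
    linarith

theorem integral_exp_neg_mul_abs_sub_mul_sin {a c ω x : ℝ} (hcω : c ^ 2 + ω ^ 2 ≠ 0)
    (hbdry : c * sin (ω * a) + ω * cos (ω * a) = 0) (hx : x ∈ Set.Icc (-a) a) :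
    ∫ y in (-a)..a, exp (-c * |x - y|) * sin (ω * y) =
      2 * c / (c ^ 2 + ω ^ 2) * sin (ω * x) := by
  have hcω' : (-c) ^ 2 + ω ^ 2 ≠ 0 := by rwa [neg_sq]
  have hleft : expSinPrimitive c ω (-a) = 0 := by
    simp [expSinPrimitive, mul_neg, sin_neg, cos_neg, ← neg_add', hbdry]
  have hright : expSinPrimitive (-c) ω a = 0 := by
    simp [expSinPrimitive, neg_mul, ← neg_add', hbdry]
  rw [integral_exp_neg_mul_abs_sub_mul (by fun_prop) c hx, integral_exp_mul_mul_sin hcω,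
    integral_exp_mul_mul_sin hcω', hleft, hright]
  simp only [expSinPrimitive, neg_sq, neg_mul, exp_neg]
  field_simp
  ring

theorem exp_kernel_sin_eigenfunction_general
    (a b ω : ℝ) (hb : 0 < b)
    (htrans : ω + (1 / b) * Real.tan (ω * a) = 0) :
    ∀ x ∈ Set.Icc (-a) a,
      ∫ y in (-a)..a, Real.exp (-|x - y| / b) * Real.sin (ω * y)
        = (2 * b / (1 + b ^ 2 * ω ^ 2)) * Real.sin (ω * x) := by
  intro x hx
  have hcω : (1 / b) ^ 2 + ω ^ 2 ≠ 0 := by positivity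
  have hkernel : ∀ y, -|x - y| / b = -(1 / b) * |x - y| := fun y => by ring
  simp only [hkernel, integral_exp_neg_mul_abs_sub_mul_sin hcω
    (mul_sin_add_mul_cos_eq_zero_of_add_mul_tan_eq_zero htrans) hx]
  field_simp

/-- Eigenfunction property of the exponential covariance kernel: if `ω > 0` solves the
transcendental equation `ω + (1/b)·tan(ω·a) = 0`, then `sin(ω·x)` is an eigenfunction with
eigenvalue `2b/(1 + b²ω²)`. -/
theorem exp_kernel_sin_eigenfunction
    (a b ω : ℝ) (ha : 0 < a) (hb : 0 < b) (hω : 0 < ω)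
    (htrans : ω + (1 / b) * Real.tan (ω * a) = 0) :
    ∀ x ∈ Set.Icc (-a) a,
      ∫ y in (-a)..a, Real.exp (-|x - y| / b) * Real.sin (ω * y)
        = (2 * b / (1 + b ^ 2 * ω ^ 2)) * Real.sin (ω * x) :=
  exp_kernel_sin_eigenfunction_general a b ω hb htrans
end

section
/- For every real polynomial p(x, y) in two variables of total degree at most 5, ∫_{ℝ²} p dγ² = (1/6)·[p(−√3, 0) + p(√3, 0) + p(0, −√3) + p(0, √3)] + (1/4)·[p(−1, −1) + p(−1, 1) + p(1, −1) + p(1, 1)] − (1/2)·[p(−1, 0) + p(1, 0) + p(0, −1) + p(0, 1)] + (4/3)·p(0, 0); that is, the 13-point level-3 Smolyak sparse grid quadrature rule built from one-dimensional Gauss–Hermite rules integrates exactly all bivariate polynomials of total degree up to 5 against the two-dimensional standard Gaussian measure. -/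
/-!
The rule is Smolyak's combination `Q₁ ⊗ Q₃ + Q₂ ⊗ Q₂ + Q₃ ⊗ Q₁ - Q₁ ⊗ Q₂ - Q₂ ⊗ Q₁` of the
Gauss–Hermite rules `Qₗ`, and `Qₗ` integrates `xᵃ` exactly against `γ` for `a ≤ 2l - 1`.
Both sides are linear in `p`, so it suffices to treat `xᵃ yᵇ` with `a + b ≤ 5`, on which a
tensor rule `Qₗ ⊗ Qₘ` gives `Qₗ(xᵃ) Qₘ(yᵇ)` and `γ²` gives `E[Xᵃ] E[Xᵇ]`. If `a ≤ 1`, all three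
`Qₗ(xᵃ)` equal `E[Xᵃ]` and the combination collapses to `E[Xᵃ] Q₃(yᵇ)`; symmetrically if `b ≤ 1`;
otherwise `a, b ≤ 3`, so `Q₂` and `Q₃` are exact in both variables and the `Q₁` terms cancel.
The moments `1, 0, 1, 0, 3, 0` come from symmetry and the recursion `E[Xⁿ⁺²] = (n + 1) E[Xⁿ]`.
-/

open MeasureTheory ProbabilityTheory Real
open scoped NNReal

namespace ProbabilityTheory

variable {μ : ℝ} {v : ℝ≥0}

lemma integrable_pow_gaussianReal (n : ℕ) : Integrable (fun x ↦ x ^ n) (gaussianReal μ v) :=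
  integrable_pow_of_mem_interior_integrableExpSet (X := id) (by simp) n

lemma integrable_gaussianPDFReal_mul {f : ℝ → ℝ} (hv : v ≠ 0)
    (hf : Integrable f (gaussianReal μ v)) :
    Integrable fun x ↦ gaussianPDFReal μ v x * f x := by
  rw [gaussianReal_of_var_ne_zero _ hv,
    integrable_withDensity_iff_integrable_smul' (measurable_gaussianPDF μ v)
      (ae_of_all _ fun _ ↦ ENNReal.ofReal_lt_top)] at hf
  simpa [ENNReal.toReal_ofReal (gaussianPDFReal_nonneg μ v _)] using hf

lemma hasDerivAt_gaussianPDFReal (hv : v ≠ 0) (x : ℝ) :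
    HasDerivAt (gaussianPDFReal μ v) (-((x - μ) / v) * gaussianPDFReal μ v x) x := by
  have hv' : (v : ℝ) ≠ 0 := by exact_mod_cast hv
  have h : HasDerivAt (fun y ↦ -(y - μ) ^ 2 / (2 * v)) (-((x - μ) / v)) x :=
    ((((hasDerivAt_id x).sub_const μ).pow 2).neg.div_const (2 * (v : ℝ))).congr_deriv
      (by field_simp; simp)
  exact (h.exp.const_mul (√(2 * π * v))⁻¹).congr_deriv (by rw [gaussianPDFReal]; ring)

lemma integral_pow_gaussianReal_of_odd {n : ℕ} (hn : Odd n) :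
    ∫ x, x ^ n ∂gaussianReal 0 v = 0 := by
  have h := integral_map (μ := gaussianReal 0 v) (φ := fun x ↦ -x) (f := fun x ↦ x ^ n)
    (by fun_prop) (by fun_prop)
  rw [gaussianReal_map_neg, neg_zero] at h
  simp only [hn.neg_pow, integral_neg] at h
  linarith

/-- Integration by parts against `x ^ (n + 1)`, using `φ' = -(x / v) φ` for the density `φ`. -/
lemma integral_pow_add_two_gaussianReal (v : ℝ≥0) (n : ℕ) :
    ∫ x, x ^ (n + 2) ∂gaussianReal 0 v = (n + 1) * v * ∫ x, x ^ n ∂gaussianReal 0 v := by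
  rcases eq_or_ne v 0 with rfl | hv
  · simp
  have hv' : (v : ℝ) ≠ 0 := by exact_mod_cast hv
  simp only [integral_gaussianReal_eq_integral_smul hv, smul_eq_mul]
  set φ := gaussianPDFReal 0 v
  have hφ (k : ℕ) : Integrable fun x ↦ φ x * x ^ k :=
    integrable_gaussianPDFReal_mul hv (integrable_pow_gaussianReal k)
  have ibp := integral_mul_deriv_eq_deriv_mul_of_integrable
    (u := fun x ↦ x ^ (n + 1)) (u' := fun x ↦ (n + 1) * x ^ n)
    (v := φ) (v' := fun x ↦ -(x / v) * φ x)
    (fun x _ ↦ by simpa using hasDerivAt_pow (n + 1) x)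
    (fun x _ ↦ by simpa using hasDerivAt_gaussianPDFReal (μ := 0) hv x)
    (((hφ (n + 2)).const_mul (-(v : ℝ)⁻¹)).congr (ae_of_all _ fun x ↦ by
      simp only [Pi.mul_apply]; field_simp; ring))
    (((hφ n).const_mul ((n : ℝ) + 1)).congr (ae_of_all _ fun x ↦ by
      simp only [Pi.mul_apply]; ring))
    ((hφ (n + 1)).congr (ae_of_all _ fun x ↦ by simp only [Pi.mul_apply]; ring))
  have lhs : ∫ x, x ^ (n + 1) * (-(x / v) * φ x) = -(v : ℝ)⁻¹ * ∫ x, φ x * x ^ (n + 2) := by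
    rw [← integral_const_mul]; congr 1; ext x; field_simp; ring
  have rhs : ∫ x, (n + 1) * x ^ n * φ x = (n + 1) * ∫ x, φ x * x ^ n := by
    rw [← integral_const_mul]; congr 1; ext x; ring
  rw [lhs, rhs] at ibp
  field_simp at ibp
  linear_combination -ibp

lemma integral_sq_gaussianReal (v : ℝ≥0) : ∫ x, x ^ 2 ∂gaussianReal 0 v = v := by
  simpa using integral_pow_add_two_gaussianReal v 0

lemma integral_pow_four_gaussianReal (v : ℝ≥0) : ∫ x, x ^ 4 ∂gaussianReal 0 v = 3 * v ^ 2 := by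
  rw [integral_pow_add_two_gaussianReal v 2, integral_sq_gaussianReal]
  ring

end ProbabilityTheory

theorem integral_eval_eq_of_exact_on_monomials {σ : Type*} [Fintype σ] {μ : Measure (σ → ℝ)}
    (Q : ((σ → ℝ) → ℝ) →ₗ[ℝ] ℝ) {N : ℕ}
    (hint : ∀ d : σ →₀ ℕ, ∑ i, d i ≤ N → Integrable (fun x ↦ ∏ i, x i ^ d i) μ)
    (hQ : ∀ d : σ →₀ ℕ, ∑ i, d i ≤ N → Q (fun x ↦ ∏ i, x i ^ d i) = ∫ x, ∏ i, x i ^ d i ∂μ)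
    {p : MvPolynomial σ ℝ} (hp : p.totalDegree ≤ N) :
    ∫ x, MvPolynomial.eval x p ∂μ = Q fun x ↦ MvPolynomial.eval x p := by
  have hdeg : ∀ d ∈ p.support, ∑ i, d i ≤ N := fun d hd ↦ by
    simpa [Finsupp.sum_fintype] using (MvPolynomial.le_totalDegree hd).trans hp
  have hfun : (fun x ↦ MvPolynomial.eval x p)
      = ∑ d ∈ p.support, p.coeff d • fun x : σ → ℝ ↦ ∏ i, x i ^ d i := by
    ext x; simp [MvPolynomial.eval_eq', Finset.sum_apply]
  conv_rhs => rw [hfun, map_sum]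
  simp only [MvPolynomial.eval_eq']
  rw [integral_finsetSum _ fun d hd ↦ (hint d (hdeg d hd)).const_mul _]
  refine Finset.sum_congr rfl fun d hd ↦ ?_
  rw [integral_const_mul, map_smul, hQ d (hdeg d hd), smul_eq_mul]

noncomputable def tensorRule (Q R : (ℝ → ℝ) →ₗ[ℝ] ℝ) : ((Fin 2 → ℝ) → ℝ) →ₗ[ℝ] ℝ where
  toFun g := Q fun x ↦ R fun y ↦ g ![x, y]
  map_add' f g := by
    change Q (fun x ↦ R ((fun y ↦ f ![x, y]) + fun y ↦ g ![x, y])) = _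
    simp only [map_add]
    exact map_add Q _ _
  map_smul' c g := by
    change Q (fun x ↦ R (c • fun y ↦ g ![x, y])) = _
    simp only [map_smul]
    exact map_smul Q c _

lemma tensorRule_apply (Q R : (ℝ → ℝ) →ₗ[ℝ] ℝ) (g : (Fin 2 → ℝ) → ℝ) :
    tensorRule Q R g = Q fun x ↦ R fun y ↦ g ![x, y] := rfl

lemma tensorRule_mul (Q R : (ℝ → ℝ) →ₗ[ℝ] ℝ) (f g : ℝ → ℝ) :
    tensorRule Q R (fun x ↦ f (x 0) * g (x 1)) = Q f * R g := by
  change Q (fun x ↦ R (f x • g)) = _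
  simp only [map_smul, smul_eq_mul, mul_comm (f _) (R g)]
  exact (map_smul Q (R g) f).trans (mul_comm _ _)

noncomputable def quadratureRule {ι : Type*} [Fintype ι] (x w : ι → ℝ) : (ℝ → ℝ) →ₗ[ℝ] ℝ :=
  ∑ i, w i • LinearMap.proj (R := ℝ) (φ := fun _ ↦ ℝ) (x i)

@[simp]
lemma quadratureRule_apply {ι : Type*} [Fintype ι] (x w : ι → ℝ) (f : ℝ → ℝ) :
    quadratureRule x w f = ∑ i, w i * f (x i) := by
  simp [quadratureRule]

noncomputable def gaussHermite₁ : (ℝ → ℝ) →ₗ[ℝ] ℝ := quadratureRule ![0] ![1]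

noncomputable def gaussHermite₂ : (ℝ → ℝ) →ₗ[ℝ] ℝ := quadratureRule ![-1, 1] ![1 / 2, 1 / 2]

noncomputable def gaussHermite₃ : (ℝ → ℝ) →ₗ[ℝ] ℝ :=
  quadratureRule ![-√3, 0, √3] ![1 / 6, 2 / 3, 1 / 6]

lemma gaussHermite₁_pow {a : ℕ} (ha : a ≤ 1) :
    gaussHermite₁ (fun x ↦ x ^ a) = ∫ x, x ^ a ∂gaussianReal 0 1 := by
  interval_cases a <;> simp [gaussHermite₁]

lemma gaussHermite₂_pow {a : ℕ} (ha : a ≤ 3) :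
    gaussHermite₂ (fun x ↦ x ^ a) = ∫ x, x ^ a ∂gaussianReal 0 1 := by
  interval_cases a <;>
    norm_num [gaussHermite₂, integral_sq_gaussianReal, integral_pow_gaussianReal_of_odd, Nat.odd_iff]

lemma gaussHermite₃_pow {a : ℕ} (ha : a ≤ 5) :
    gaussHermite₃ (fun x ↦ x ^ a) = ∫ x, x ^ a ∂gaussianReal 0 1 := by
  have h4 : √3 ^ 4 = 9 := by
    rw [show 4 = 2 * 2 by rfl, pow_mul, Real.sq_sqrt (by norm_num)]; norm_num
  interval_cases a <;>
    simp [gaussHermite₃, Fin.sum_univ_three, Odd.neg_pow, Nat.odd_iff,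
      integral_sq_gaussianReal, integral_pow_four_gaussianReal, integral_pow_gaussianReal_of_odd]
      <;> norm_num [h4]

noncomputable def smolyakRule₃ : ((Fin 2 → ℝ) → ℝ) →ₗ[ℝ] ℝ :=
  tensorRule gaussHermite₁ gaussHermite₃ + tensorRule gaussHermite₂ gaussHermite₂
    + tensorRule gaussHermite₃ gaussHermite₁
    - tensorRule gaussHermite₁ gaussHermite₂ - tensorRule gaussHermite₂ gaussHermite₁

lemma smolyakRule₃_apply (g : (Fin 2 → ℝ) → ℝ) :
    smolyakRule₃ g
      = 1 / 6 * (g ![-√3, 0] + g ![√3, 0] + g ![0, -√3] + g ![0, √3])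
        + 1 / 4 * (g ![-1, -1] + g ![-1, 1] + g ![1, -1] + g ![1, 1])
        - 1 / 2 * (g ![-1, 0] + g ![1, 0] + g ![0, -1] + g ![0, 1])
        + 4 / 3 * g ![0, 0] := by
  simp [smolyakRule₃, tensorRule_apply, gaussHermite₁, gaussHermite₂, gaussHermite₃,
    Fin.sum_univ_three]
  ring

lemma smolyakRule₃_pow_mul_pow {a b : ℕ} (hab : a + b ≤ 5) :
    smolyakRule₃ (fun x ↦ x 0 ^ a * x 1 ^ b)
      = (∫ x, x ^ a ∂gaussianReal 0 1) * ∫ x, x ^ b ∂gaussianReal 0 1 := by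
  have htensor (Q R : (ℝ → ℝ) →ₗ[ℝ] ℝ) : tensorRule Q R (fun x ↦ x 0 ^ a * x 1 ^ b)
      = Q (fun y ↦ y ^ a) * R (fun y ↦ y ^ b) := tensorRule_mul Q R _ _
  simp only [smolyakRule₃, LinearMap.add_apply, LinearMap.sub_apply, htensor]
  rcases le_or_gt a 1 with ha | ha
  · rw [gaussHermite₁_pow ha, gaussHermite₂_pow (a := a) (by omega),
      gaussHermite₃_pow (a := a) (by omega), gaussHermite₃_pow (a := b) (by omega)]
    ring
  rcases le_or_gt b 1 with hb | hb
  · rw [gaussHermite₁_pow hb, gaussHermite₂_pow (a := b) (by omega),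
      gaussHermite₃_pow (a := b) (by omega), gaussHermite₃_pow (a := a) (by omega)]
    ring
  rw [gaussHermite₂_pow (a := a) (by omega), gaussHermite₂_pow (a := b) (by omega),
    gaussHermite₃_pow (a := a) (by omega), gaussHermite₃_pow (a := b) (by omega)]
  ring

/-- The 13-point level-3 Smolyak sparse grid quadrature rule built from one-dimensional
Gauss–Hermite rules integrates exactly all bivariate polynomials of total degree up to `5`
against the two-dimensional standard Gaussian measure. -/
theorem smolyak_level3_sparse_grid (p : MvPolynomial (Fin 2) ℝ)
    (hp : p.totalDegree ≤ 5) :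
    (∫ x : Fin 2 → ℝ, MvPolynomial.eval x p
        ∂(Measure.pi fun _ : Fin 2 => gaussianReal 0 1))
      = (1 / 6) * (MvPolynomial.eval ![-Real.sqrt 3, 0] p
            + MvPolynomial.eval ![Real.sqrt 3, 0] p
            + MvPolynomial.eval ![0, -Real.sqrt 3] p
            + MvPolynomial.eval ![0, Real.sqrt 3] p)
        + (1 / 4) * (MvPolynomial.eval ![-1, -1] p
            + MvPolynomial.eval ![-1, 1] p
            + MvPolynomial.eval ![1, -1] p
            + MvPolynomial.eval ![1, 1] p)
        - (1 / 2) * (MvPolynomial.eval ![-1, 0] p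
            + MvPolynomial.eval ![1, 0] p
            + MvPolynomial.eval ![0, -1] p
            + MvPolynomial.eval ![0, 1] p)
        + (4 / 3) * MvPolynomial.eval ![0, 0] p := by
  rw [← smolyakRule₃_apply fun x ↦ MvPolynomial.eval x p]
  refine integral_eval_eq_of_exact_on_monomials smolyakRule₃
    (fun d _ ↦ Integrable.fintype_prod fun i ↦ integrable_pow_gaussianReal (d i))
    (fun d hd ↦ ?_) hp
  rw [integral_fintype_prod_eq_prod (fun i (y : ℝ) ↦ y ^ d i)]
  simp only [Fin.prod_univ_two, Fin.sum_univ_two] at hd ⊢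
  exact smolyakRule₃_pow_mul_pow hd
end

section
/- Let a > 0 and b > 0, and let ω₁ > 0 and ω₂ > 0 be two distinct solutions (ω₁ ≠ ω₂) of the transcendental equation 1/b = ω·tan(ω·a). Then ∫_{−a}^{a} cos(ω₁·x)·cos(ω₂·x) dx = 0; that is, eigenfunctions of the exponential covariance kernel associated with distinct odd-index frequencies are orthogonal on [−a, a]. -/
open Real intervalIntegral

/-!
Both `cos (ω₁ x)` and `cos (ω₂ x)` solve `y'' = -ω² y`, so their Wronskian
`W = ω₁ sin(ω₁x) cos(ω₂x) - ω₂ cos(ω₁x) sin(ω₂x)` has derivative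
`(ω₁² - ω₂²) cos(ω₁x) cos(ω₂x)` (Green's identity). Hence `(ω₁² - ω₂²)` times the integral
is `W a - W (-a) = 2 W a`, and the transcendental equation, multiplied by
`cos(ω₁a) cos(ω₂a)`, says exactly that `W a = 0`.
-/

noncomputable def cosWronskian (ω₁ ω₂ x : ℝ) : ℝ :=
  ω₁ * sin (ω₁ * x) * cos (ω₂ * x) - ω₂ * cos (ω₁ * x) * sin (ω₂ * x)

theorem cosWronskian_neg (ω₁ ω₂ x : ℝ) : cosWronskian ω₁ ω₂ (-x) = -cosWronskian ω₁ ω₂ x := by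
  simp only [cosWronskian, mul_neg, sin_neg, cos_neg]
  ring

theorem hasDerivAt_cosWronskian (ω₁ ω₂ x : ℝ) :
    HasDerivAt (cosWronskian ω₁ ω₂)
      ((ω₁ ^ 2 - ω₂ ^ 2) * (cos (ω₁ * x) * cos (ω₂ * x))) x := by
  have hsin (ω : ℝ) : HasDerivAt (fun x => sin (ω * x)) (cos (ω * x) * ω) x := by
    simpa using ((hasDerivAt_id x).const_mul ω).sin
  have hcos (ω : ℝ) : HasDerivAt (fun x => cos (ω * x)) (-sin (ω * x) * ω) x := by
    simpa using ((hasDerivAt_id x).const_mul ω).cos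
  exact ((((hsin ω₁).const_mul ω₁).mul (hcos ω₂)).sub
    (((hcos ω₁).const_mul ω₂).mul (hsin ω₂))).congr_deriv (by ring)

theorem mul_integral_cos_mul_cos (ω₁ ω₂ u v : ℝ) :
    (ω₁ ^ 2 - ω₂ ^ 2) * ∫ x in u..v, cos (ω₁ * x) * cos (ω₂ * x) =
      cosWronskian ω₁ ω₂ v - cosWronskian ω₁ ω₂ u := by
  rw [← integral_const_mul]
  exact integral_eq_sub_of_hasDerivAt (fun x _ => hasDerivAt_cosWronskian ω₁ ω₂ x)
    (by apply Continuous.intervalIntegrable; fun_prop)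

theorem cos_ne_zero_of_mul_tan_ne_zero {ω x : ℝ} (h : ω * tan x ≠ 0) : cos x ≠ 0 := by
  intro hcos
  rw [tan_eq_sin_div_cos, hcos, div_zero, mul_zero] at h
  exact h rfl

theorem cosWronskian_eq_zero_of_mul_tan_eq {ω₁ ω₂ a : ℝ}
    (h : ω₁ * tan (ω₁ * a) = ω₂ * tan (ω₂ * a)) (h₀ : ω₁ * tan (ω₁ * a) ≠ 0) :
    cosWronskian ω₁ ω₂ a = 0 := by
  have hc₁ : cos (ω₁ * a) ≠ 0 := cos_ne_zero_of_mul_tan_ne_zero h₀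
  have hc₂ : cos (ω₂ * a) ≠ 0 := cos_ne_zero_of_mul_tan_ne_zero (h ▸ h₀)
  have hW : cosWronskian ω₁ ω₂ a =
      cos (ω₁ * a) * cos (ω₂ * a) * (ω₁ * tan (ω₁ * a) - ω₂ * tan (ω₂ * a)) := by
    rw [cosWronskian, tan_eq_sin_div_cos, tan_eq_sin_div_cos]
    generalize cos (ω₁ * a) = c₁, cos (ω₂ * a) = c₂ at hc₁ hc₂ ⊢
    field_simp
  rw [hW, h, sub_self, mul_zero]

theorem exp_kernel_cos_eigenfunctions_orthogonal_general
    (a b ω₁ ω₂ : ℝ) (hb : 0 < b)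
    (hω₁ : 0 < ω₁) (hω₂ : 0 < ω₂) (hne : ω₁ ≠ ω₂)
    (htrans₁ : 1 / b = ω₁ * Real.tan (ω₁ * a))
    (htrans₂ : 1 / b = ω₂ * Real.tan (ω₂ * a)) :
    ∫ x in (-a)..a, Real.cos (ω₁ * x) * Real.cos (ω₂ * x) = 0 := by
  have hsq : ω₁ ^ 2 - ω₂ ^ 2 ≠ 0 := by
    rw [sq_sub_sq]
    exact mul_ne_zero (by positivity) (sub_ne_zero.mpr hne)
  have hW : cosWronskian ω₁ ω₂ a = 0 :=
    cosWronskian_eq_zero_of_mul_tan_eq (htrans₁.symm.trans htrans₂)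
      (htrans₁ ▸ by positivity)
  have hint := mul_integral_cos_mul_cos ω₁ ω₂ (-a) a
  rw [cosWronskian_neg, hW, neg_zero, sub_zero] at hint
  exact (mul_eq_zero.mp hint).resolve_left hsq

/-- Eigenfunctions of the exponential covariance kernel associated with distinct
odd-index frequencies are orthogonal on `[-a, a]`: if `ω₁ ≠ ω₂` both solve
`1/b = ω·tan(ω·a)`, then `∫_{-a}^{a} cos(ω₁·x)·cos(ω₂·x) dx = 0`. -/
theorem exp_kernel_cos_eigenfunctions_orthogonal
    (a b ω₁ ω₂ : ℝ) (ha : 0 < a) (hb : 0 < b)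
    (hω₁ : 0 < ω₁) (hω₂ : 0 < ω₂) (hne : ω₁ ≠ ω₂)
    (htrans₁ : 1 / b = ω₁ * Real.tan (ω₁ * a))
    (htrans₂ : 1 / b = ω₂ * Real.tan (ω₂ * a)) :
    ∫ x in (-a)..a, Real.cos (ω₁ * x) * Real.cos (ω₂ * x) = 0 :=
  exp_kernel_cos_eigenfunctions_orthogonal_general a b ω₁ ω₂ hb hω₁ hω₂ hne htrans₁ htrans₂
end
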